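/- arXiv:2110.13312 — 3 statements merged into one kernel-verified Lean document; each statement's English description precedes it below -/
import Mathlib

section
/- Let (X,d,μ) be an upper doubling metric measure space with dominating function λ satisfying λ(x,r) ≤ C̃ λ(y,r) whenever d(x,y) ≤ r. Then there exists a constant C > 0 such that for all balls B ⊂ R ⊂ Q, K_{B,Q} ≤ K_{B,R} + C · K_{R,Q}, where K_{B,Q} = 1 + Σ_{k=1}^{N_{B,Q}} μ(6^k B)/λ(x_B, 6^k r_B). -/
/-!
For `k > N_{B,R}` the radius `6^k r_B` lies between `6^i r_R` and `6^{i+1} r_R`, where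
`i = k - N_{B,R}`, so `6^k B ⊆ 6^{i+2} R`; six doublings and one change of centre give
`μ(6^k B)/λ(x_B, 6^k r_B) ≤ C_λ^6 C̃ μ(6^{i+2} R)/λ(x_R, 6^{i+2} r_R)`. Since
`N_{B,Q} ≤ N_{B,R} + N_{R,Q}`, splitting the sum of `K_{B,Q}` at `N_{B,R}` leaves the terms of
`K_{B,R}` plus a tail matched against `K_{R,Q}`, except for the last two terms, each of which is at
most `1` because `μ(B(x, r)) ≤ λ(x, r)`.
-/

open MeasureTheory Metric
open scoped ENNReal NNReal

/-- `N_{B,Q}`: the smallest integer `n` with `6^n r_B ≥ r_Q`. -/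
noncomputable def NBQ (rB rQ : ℝ) : ℕ := sInf {n : ℕ | rQ ≤ 6 ^ n * rB}

/-- The coefficient `K_{B,Q} = 1 + ∑_{k=1}^{N_{B,Q}} μ(6^k B)/λ(x_B, 6^k r_B)`. -/
noncomputable def Kcoef {X : Type*} [MetricSpace X] [MeasurableSpace X]
    (μ : Measure X) (lam : X → ℝ → ℝ) (xB : X) (rB rQ : ℝ) : ℝ≥0∞ :=
  1 + ∑ k ∈ Finset.Icc 1 (NBQ rB rQ),
      μ (ball xB ((6 : ℝ) ^ k * rB)) / ENNReal.ofReal (lam xB ((6 : ℝ) ^ k * rB))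

lemma le_six_pow_NBQ_mul {rB : ℝ} (hrB : 0 < rB) (rQ : ℝ) : rQ ≤ 6 ^ NBQ rB rQ * rB := by
  obtain ⟨n, hn⟩ := pow_unbounded_of_one_lt (rQ / rB) (by norm_num : (1 : ℝ) < 6)
  exact Nat.sInf_mem (s := {n : ℕ | rQ ≤ 6 ^ n * rB}) ⟨n, ((div_lt_iff₀ hrB).1 hn).le⟩

lemma NBQ_le_of_le {rB rQ : ℝ} {n : ℕ} (h : rQ ≤ 6 ^ n * rB) : NBQ rB rQ ≤ n := Nat.sInf_le h

lemma NBQ_mono_right {rB rR rQ : ℝ} (hrB : 0 < rB) (h : rR ≤ rQ) : NBQ rB rR ≤ NBQ rB rQ :=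
  NBQ_le_of_le (h.trans (le_six_pow_NBQ_mul hrB rQ))

lemma NBQ_le_add {rB rR : ℝ} (hrB : 0 < rB) (hrR : 0 < rR) (rQ : ℝ) :
    NBQ rB rQ ≤ NBQ rB rR + NBQ rR rQ := by
  refine NBQ_le_of_le ?_
  calc rQ ≤ 6 ^ NBQ rR rQ * rR := le_six_pow_NBQ_mul hrR rQ
    _ ≤ 6 ^ NBQ rR rQ * (6 ^ NBQ rB rR * rB) := by gcongr; exact le_six_pow_NBQ_mul hrB rR
    _ = 6 ^ (NBQ rB rR + NBQ rR rQ) * rB := by ring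

/-- Minimality of `N_{B,R}`: one step fewer would not reach `r_R`. -/
lemma six_pow_NBQ_mul_le {rB rR : ℝ} (hrR : 0 ≤ rR) (h : rB ≤ rR) :
    6 ^ NBQ rB rR * rB ≤ 6 * rR := by
  obtain hN | hN := Nat.eq_zero_or_pos (NBQ rB rR)
  · rw [hN, pow_zero, one_mul]
    linarith
  · by_contra! hlt
    have : NBQ rB rR ≤ NBQ rB rR - 1 := NBQ_le_of_le <| by
      rw [← Nat.sub_add_cancel hN, pow_succ] at hlt
      linarith
    omega

lemma lam_two_pow_mul_le {X : Type*} {lam : X → ℝ → ℝ} {Clam : ℝ} (hClam : 0 ≤ Clam)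
    (hdoub : ∀ (x : X) (r : ℝ), 0 < r → lam x r ≤ Clam * lam x (r / 2))
    (x : X) (n : ℕ) {r : ℝ} (hr : 0 < r) : lam x (2 ^ n * r) ≤ Clam ^ n * lam x r := by
  induction n with
  | zero => simp
  | succ n ih =>
    calc lam x (2 ^ (n + 1) * r) ≤ Clam * lam x (2 ^ (n + 1) * r / 2) := hdoub x _ (by positivity)
      _ = Clam * lam x (2 ^ n * r) := by ring_nf
      _ ≤ Clam * (Clam ^ n * lam x r) := by gcongr
      _ = Clam ^ (n + 1) * lam x r := by ring

lemma ENNReal.div_le_mul_div {a a' c d d' : ℝ≥0∞} (ha : a ≤ a') (hd : d' ≤ c * d)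
    (hc₀ : c ≠ 0) (hc : c ≠ ⊤) : a / d ≤ c * (a' / d') := by
  have hinv : d⁻¹ ≤ c * d'⁻¹ :=
    calc d⁻¹ = c * (c⁻¹ * d⁻¹) := by
          rw [← mul_assoc, ENNReal.mul_inv_cancel hc₀ hc, one_mul]
      _ = c * (c * d)⁻¹ := by rw [ENNReal.mul_inv (Or.inl hc₀) (Or.inl hc)]
      _ ≤ c * d'⁻¹ := by gcongr
  calc a / d = a * d⁻¹ := div_eq_mul_inv a d
    _ ≤ a' * (c * d'⁻¹) := mul_le_mul' ha hinv
    _ = c * (a' / d') := by rw [div_eq_mul_inv]; ring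

section BallRatio

variable {X : Type*} [MetricSpace X] [MeasurableSpace X]

noncomputable def ballRatio (μ : Measure X) (lam : X → ℝ → ℝ) (x : X) (r : ℝ) : ℝ≥0∞ :=
  μ (ball x r) / ENNReal.ofReal (lam x r)

lemma Kcoef_eq_ballRatio (μ : Measure X) (lam : X → ℝ → ℝ) (xB : X) (rB rQ : ℝ) :
    Kcoef μ lam xB rB rQ = 1 + ∑ k ∈ Finset.Ioc 0 (NBQ rB rQ), ballRatio μ lam xB (6 ^ k * rB) := by
  rw [Kcoef, ← Finset.Icc_add_one_left_eq_Ioc, zero_add]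
  rfl

lemma ballRatio_le_one {μ : Measure X} {lam : X → ℝ → ℝ}
    (hdom : ∀ (x : X) (r : ℝ), 0 < r → μ (ball x r) ≤ ENNReal.ofReal (lam x r))
    (x : X) {r : ℝ} (hr : 0 < r) : ballRatio μ lam x r ≤ 1 :=
  ENNReal.div_le_of_le_mul (by simpa using hdom x r hr)

/-- `Clam ^ n` pays for the `n` doublings from `ρ` to `τ`, `Ct` for moving the centre. -/
lemma ballRatio_le_of_subset {μ : Measure X} {lam : X → ℝ → ℝ} {Clam Ct : ℝ} (hClam : 1 ≤ Clam)
    (hpos : ∀ (x : X) (r : ℝ), 0 < r → 0 < lam x r)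
    (hmono : ∀ (x : X) (r s : ℝ), 0 < r → r ≤ s → lam x r ≤ lam x s)
    (hdoub : ∀ (x : X) (r : ℝ), 0 < r → lam x r ≤ Clam * lam x (r / 2))
    (hcomp : ∀ (x y : X) (r : ℝ), dist x y ≤ r → lam x r ≤ Ct * lam y r)
    {x y : X} {ρ τ : ℝ} (n : ℕ) (hρ : 0 < ρ) (hxy : dist x y ≤ ρ) (hsub : ρ + dist x y ≤ τ)
    (hτ : τ ≤ 2 ^ n * ρ) :
    ballRatio μ lam x ρ ≤ ENNReal.ofReal (Clam ^ n * Ct) * ballRatio μ lam y τ := by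
  have hCt : 1 ≤ Ct := by
    have := hcomp x x ρ (by simpa using hρ.le)
    nlinarith [hpos x ρ hρ]
  have hClam_pow : 0 < Clam ^ n := pow_pos (by linarith) n
  have hlam : lam y τ ≤ Clam ^ n * Ct * lam x ρ :=
    calc lam y τ ≤ lam y (2 ^ n * ρ) := hmono y τ _ (by linarith [dist_nonneg (x := x) (y := y)]) hτ
      _ ≤ Clam ^ n * lam y ρ := lam_two_pow_mul_le (by linarith) hdoub y n hρ
      _ ≤ Clam ^ n * (Ct * lam x ρ) := by gcongr; exact hcomp y x ρ (by rwa [dist_comm])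
      _ = Clam ^ n * Ct * lam x ρ := by ring
  refine ENNReal.div_le_mul_div (measure_mono (ball_subset_ball' hsub)) ?_ ?_ ENNReal.ofReal_ne_top
  · rw [← ENNReal.ofReal_mul (by positivity)]
    exact ENNReal.ofReal_le_ofReal hlam
  · exact (ENNReal.ofReal_pos.2 (mul_pos hClam_pow (by linarith))).ne'

lemma ballRatio_six_pow_le {μ : Measure X} {lam : X → ℝ → ℝ} {Clam Ct : ℝ} (hClam : 1 ≤ Clam)
    (hpos : ∀ (x : X) (r : ℝ), 0 < r → 0 < lam x r)
    (hmono : ∀ (x : X) (r s : ℝ), 0 < r → r ≤ s → lam x r ≤ lam x s)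
    (hdoub : ∀ (x : X) (r : ℝ), 0 < r → lam x r ≤ Clam * lam x (r / 2))
    (hcomp : ∀ (x y : X) (r : ℝ), dist x y ≤ r → lam x r ≤ Ct * lam y r)
    {xB xR : X} {rB rR : ℝ} (hrB : 0 < rB) (hBR : rB ≤ rR) (hxBR : dist xB xR < rR) (i : ℕ) :
    ballRatio μ lam xB (6 ^ (NBQ rB rR + i) * rB) ≤
      ENNReal.ofReal (Clam ^ 6 * Ct) * ballRatio μ lam xR (6 ^ (i + 2) * rR) := by
  have hrR : 0 < rR := hrB.trans_le hBR
  have hρ : 6 ^ (NBQ rB rR + i) * rB = 6 ^ i * (6 ^ NBQ rB rR * rB) := by ring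
  have hρ_ge : 6 ^ i * rR ≤ 6 ^ (NBQ rB rR + i) * rB := by
    rw [hρ]; gcongr; exact le_six_pow_NBQ_mul hrB rR
  have hρ_le : 6 ^ (NBQ rB rR + i) * rB ≤ 6 ^ i * (6 * rR) := by
    rw [hρ]; exact mul_le_mul_of_nonneg_left (six_pow_NBQ_mul_le hrR.le hBR) (by positivity)
  have hrR_le : rR ≤ 6 ^ i * rR := le_mul_of_one_le_left hrR.le (one_le_pow₀ (by norm_num))
  have hτ : (6 : ℝ) ^ (i + 2) * rR = 36 * (6 ^ i * rR) := by ring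
  refine ballRatio_le_of_subset hClam hpos hmono hdoub hcomp 6 (by positivity) (by linarith)
    ?_ ?_ <;> rw [hτ] <;> linarith

end BallRatio

/-- The two terms with `k > a + m - 2` have no partner in `s` and are bounded by `1` each. -/
lemma sum_Ioc_le_mul_sum_add_two {t s : ℕ → ℝ≥0∞} {c : ℝ≥0∞} {a b m : ℕ} (hb : b ≤ a + m)
    (ht : ∀ k, t k ≤ 1) (hts : ∀ i, t (a + i) ≤ c * s (i + 2)) :
    ∑ k ∈ Finset.Ioc a b, t k ≤ c * ∑ j ∈ Finset.Ioc 0 m, s j + 2 := by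
  have hhead : ∑ k ∈ Finset.Ioc a (a + (m - 2)), t k ≤ c * ∑ j ∈ Finset.Ioc 0 m, s j :=
    calc ∑ k ∈ Finset.Ioc a (a + (m - 2)), t k = ∑ i ∈ Finset.Ioc 0 (m - 2), t (a + i) := by
          simpa using (Finset.sum_map (Finset.Ioc 0 (m - 2)) (addLeftEmbedding a) t)
      _ ≤ ∑ i ∈ Finset.Ioc 0 (m - 2), c * s (i + 2) := Finset.sum_le_sum fun i _ => hts i
      _ = c * ∑ j ∈ Finset.Ioc 2 (m - 2 + 2), s j := by
          simpa [Finset.mul_sum] using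
            (Finset.sum_map (Finset.Ioc 0 (m - 2)) (addRightEmbedding 2) (fun j => c * s j)).symm
      _ ≤ c * ∑ j ∈ Finset.Ioc 0 m, s j := by
          refine mul_le_mul_right (Finset.sum_le_sum_of_subset fun j hj => ?_) c
          simp only [Finset.mem_Ioc] at hj ⊢
          omega
  have hlast : ∑ k ∈ Finset.Ioc (a + (m - 2)) (a + m), t k ≤ 2 :=
    calc ∑ k ∈ Finset.Ioc (a + (m - 2)) (a + m), t k
        ≤ ∑ _k ∈ Finset.Ioc (a + (m - 2)) (a + m), (1 : ℝ≥0∞) := Finset.sum_le_sum fun k _ => ht k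
      _ = ((a + m - (a + (m - 2)) : ℕ) : ℝ≥0∞) := by simp
      _ ≤ 2 := by exact_mod_cast (by omega : a + m - (a + (m - 2)) ≤ 2)
  calc ∑ k ∈ Finset.Ioc a b, t k ≤ ∑ k ∈ Finset.Ioc a (a + m), t k :=
        Finset.sum_le_sum_of_subset (Finset.Ioc_subset_Ioc_right hb)
    _ = ∑ k ∈ Finset.Ioc a (a + (m - 2)), t k + ∑ k ∈ Finset.Ioc (a + (m - 2)) (a + m), t k :=
        (Finset.sum_Ioc_consecutive _ (by omega) (by omega)).symm
    _ ≤ c * ∑ j ∈ Finset.Ioc 0 m, s j + 2 := add_le_add hhead hlast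

/-- For balls `B ⊂ R ⊂ Q`, `K_{B,Q} ≤ K_{B,R} + C K_{R,Q}`. -/
theorem Kcoef_triangle
    {X : Type*} [MetricSpace X] [MeasurableSpace X] (μ : Measure X)
    (lam : X → ℝ → ℝ) (Clam Ct : ℝ) (hClam : 1 ≤ Clam)
    (hpos : ∀ (x : X) (r : ℝ), 0 < r → 0 < lam x r)
    (hmono : ∀ (x : X) (r s : ℝ), 0 < r → r ≤ s → lam x r ≤ lam x s)
    (hdom : ∀ (x : X) (r : ℝ), 0 < r → μ (ball x r) ≤ ENNReal.ofReal (lam x r))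
    (hdoub : ∀ (x : X) (r : ℝ), 0 < r → lam x r ≤ Clam * lam x (r / 2))
    (hcomp : ∀ (x y : X) (r : ℝ), dist x y ≤ r → lam x r ≤ Ct * lam y r) :
    ∃ C : ℝ≥0∞, 0 < C ∧ C < ⊤ ∧
      ∀ (xB xR xQ : X) (rB rR rQ : ℝ), 0 < rB → rB ≤ rR → rR ≤ rQ →
        ball xB rB ⊆ ball xR rR → ball xR rR ⊆ ball xQ rQ →
        Kcoef μ lam xB rB rQ ≤ Kcoef μ lam xB rB rR + C * Kcoef μ lam xR rR rQ := by
  set c := ENNReal.ofReal (Clam ^ 6 * Ct)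
  refine ⟨c + 2, by positivity, by finiteness, ?_⟩
  intro xB xR xQ rB rR rQ hrB hBR hRQ hBsubR _
  have hrR : 0 < rR := hrB.trans_le hBR
  rw [Kcoef_eq_ballRatio, Kcoef_eq_ballRatio, Kcoef_eq_ballRatio,
    ← Finset.sum_Ioc_consecutive _ (Nat.zero_le _) (NBQ_mono_right hrB hRQ), ← add_assoc]
  set S := ∑ j ∈ Finset.Ioc 0 (NBQ rR rQ), ballRatio μ lam xR (6 ^ j * rR)
  have htail : ∑ k ∈ Finset.Ioc (NBQ rB rR) (NBQ rB rQ), ballRatio μ lam xB (6 ^ k * rB) ≤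
      c * S + 2 :=
    sum_Ioc_le_mul_sum_add_two (NBQ_le_add hrB hrR rQ)
      (fun k => ballRatio_le_one hdom xB (by positivity))
      (ballRatio_six_pow_le hClam hpos hmono hdoub hcomp hrB hBR (hBsubR (mem_ball_self hrB)))
  refine add_le_add le_rfl (htail.trans ?_)
  calc c * S + 2 ≤ c * S + 2 + (c + 2 * S) := le_self_add
    _ = (c + 2) * (1 + S) := by ring
end

section
/- Let (X,d,μ) be an upper doubling space with dominating function λ and constant C_λ, and let β₀ > C_λ^{log₂ 6}. Then for μ-almost every x ∈ X (indeed for every x with λ(x,r) > 0 for all r) and every r > 0, there exist arbitrarily large k ∈ ℕ such that the ball 6^k B(x,r) is (6,β₀)-doubling, i.e., μ(6^{k+1} B(x,r)) ≤ β₀ μ(6^k B(x,r)), provided μ(B(x,r)) > 0. -/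
/-!
If none of the balls `6^k B(x,r)`, `k ≥ n`, were `(6,β₀)`-doubling, their measures would grow at
least like `β₀^m` along `k = n + m`. But the upper doubling bound caps them: `λ(x, ρ t)` grows at
most like `C_λ ^ log₂ ρ`, so `μ(6^{n+m} B(x,r)) ≲ (C_λ^{log₂ 6})^m`, and `C_λ^{log₂ 6} < β₀`.
-/

open MeasureTheory Metric Filter Topology
open scoped ENNReal NNReal

theorem mul_pow_le_of_mul_le_succ {M : Type*} [CommMonoid M] [Preorder M] [MulLeftMono M]
    {u : ℕ → M} {β : M} (h : ∀ k, β * u k ≤ u (k + 1)) (m : ℕ) : u 0 * β ^ m ≤ u m := by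
  induction m with
  | zero => simp
  | succ m ih =>
    calc u 0 * β ^ (m + 1) = β * (u 0 * β ^ m) := by rw [pow_succ', mul_left_comm]
      _ ≤ β * u m := mul_le_mul_right ih β
      _ ≤ u (m + 1) := h m

theorem ENNReal.exists_mul_pow_lt_mul_pow {a K A β : ℝ≥0∞} (ha : a ≠ 0) (hK : K ≠ ∞)
    (hAβ : A < β) : ∃ m : ℕ, K * A ^ m < a * β ^ m := by
  obtain ⟨b, hAb, hbβ⟩ := ENNReal.lt_iff_exists_nnreal_btwn.1 hAβ
  have hb : (b : ℝ≥0∞) ≠ 0 := (hAb.trans_le' bot_le).ne'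
  have hratio : A / b < 1 := (ENNReal.div_lt_iff (.inl hb) (.inl ENNReal.coe_ne_top)).2 (by simpa)
  have htend : Tendsto (fun m : ℕ ↦ K * (A / b) ^ m) atTop (𝓝 0) := by
    simpa using ENNReal.Tendsto.const_mul (ENNReal.tendsto_pow_atTop_nhds_zero_of_lt_one hratio)
      (.inr hK)
  obtain ⟨m, hm⟩ := (htend.eventually_lt_const (pos_iff_ne_zero.2 ha)).exists
  refine ⟨m, ?_⟩
  calc K * A ^ m = K * (A / b) ^ m * (b : ℝ≥0∞) ^ m := by
        rw [mul_assoc, ← mul_pow, ENNReal.div_mul_cancel hb ENNReal.coe_ne_top]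
    _ < a * (b : ℝ≥0∞) ^ m :=
        ENNReal.mul_lt_mul_left (pow_ne_zero _ hb) (ENNReal.pow_ne_top ENNReal.coe_ne_top) hm
    _ ≤ a * β ^ m := by gcongr

section DoublingFunction

variable {f : ℝ → ℝ} {C : ℝ}

theorem le_pow_mul_of_le_mul_half (hC : 0 ≤ C) (hdoub : ∀ r, 0 < r → f r ≤ C * f (r / 2))
    {t : ℝ} (ht : 0 < t) (j : ℕ) : f (2 ^ j * t) ≤ C ^ j * f t := by
  induction j with
  | zero => simp
  | succ j ih =>
    calc f (2 ^ (j + 1) * t) ≤ C * f (2 ^ j * t) := by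
          simpa [pow_succ, mul_right_comm _ (2 : ℝ) t] using hdoub (2 ^ (j + 1) * t) (by positivity)
      _ ≤ C * (C ^ j * f t) := mul_le_mul_of_nonneg_left ih hC
      _ = C ^ (j + 1) * f t := by ring

theorem le_mul_rpow_logb_mul_of_le_mul_half (hC : 1 ≤ C)
    (hmono : ∀ r s, 0 < r → r ≤ s → f r ≤ f s) (hdoub : ∀ r, 0 < r → f r ≤ C * f (r / 2))
    {t ρ : ℝ} (ht : 0 < t) (hft : 0 ≤ f t) (hρ : 1 ≤ ρ) :
    f (ρ * t) ≤ C * C ^ Real.logb 2 ρ * f t := by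
  set j := ⌈Real.logb 2 ρ⌉₊
  have hlog : 0 ≤ Real.logb 2 ρ := Real.logb_nonneg (by norm_num) hρ
  have hρj : ρ ≤ 2 ^ j := by
    calc ρ = 2 ^ Real.logb 2 ρ := (Real.rpow_logb (by norm_num) (by norm_num) (by linarith)).symm
      _ ≤ 2 ^ (j : ℝ) := Real.rpow_le_rpow_of_exponent_le (by norm_num) (Nat.le_ceil _)
      _ = 2 ^ j := Real.rpow_natCast 2 j
  have hCj : C ^ j ≤ C * C ^ Real.logb 2 ρ := by
    calc C ^ j = C ^ (j : ℝ) := (Real.rpow_natCast C j).symm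
      _ ≤ C ^ (Real.logb 2 ρ + 1) :=
          Real.rpow_le_rpow_of_exponent_le hC (Nat.ceil_lt_add_one hlog).le
      _ = C * C ^ Real.logb 2 ρ := by
          rw [Real.rpow_add (by linarith), Real.rpow_one, mul_comm]
  calc f (ρ * t) ≤ f (2 ^ j * t) := hmono _ _ (by positivity) (by gcongr)
    _ ≤ C ^ j * f t := le_pow_mul_of_le_mul_half (by linarith) hdoub ht j
    _ ≤ C * C ^ Real.logb 2 ρ * f t := by gcongr

end DoublingFunction

theorem measure_ball_pow_mul_le_of_le_mul_half {X : Type*} [PseudoMetricSpace X]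
    [MeasurableSpace X] {μ : Measure X} {x : X} {f : ℝ → ℝ} {C : ℝ} (hC : 1 ≤ C)
    (hmono : ∀ r s, 0 < r → r ≤ s → f r ≤ f s) (hdom : ∀ r, 0 < r → μ (ball x r) ≤ .ofReal (f r))
    (hdoub : ∀ r, 0 < r → f r ≤ C * f (r / 2)) {s a : ℝ} (hs : 0 < s) (hfs : 0 ≤ f s)
    (ha : 1 ≤ a) (m : ℕ) :
    μ (ball x (a ^ m * s)) ≤ .ofReal (C * f s) * (.ofReal C ^ Real.logb 2 a) ^ m := by
  have hC₀ : 0 < C := by linarith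
  calc μ (ball x (a ^ m * s)) ≤ .ofReal (f (a ^ m * s)) := hdom _ (by positivity)
    _ ≤ .ofReal (C * C ^ Real.logb 2 (a ^ m) * f s) := ENNReal.ofReal_le_ofReal <|
        le_mul_rpow_logb_mul_of_le_mul_half hC hmono hdoub hs hfs (one_le_pow₀ ha)
    _ = .ofReal (C * f s) * (.ofReal C ^ Real.logb 2 a) ^ m := by
        rw [Real.logb_pow, mul_comm (m : ℝ), Real.rpow_mul hC₀.le, Real.rpow_natCast,
          ENNReal.ofReal_rpow_of_pos hC₀, ← ENNReal.ofReal_pow (by positivity),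
          ← ENNReal.ofReal_mul (by positivity), mul_right_comm]

/-- In an upper doubling space, for every `x` where the dominating function is positive
(and every ball around `x` has positive measure), there exist arbitrarily large `k`
such that `6^k B(x,r)` is `(6,β₀)`-doubling, provided `β₀ > C_λ^{log₂ 6}`. -/
theorem exists_large_doubling_balls
    {X : Type*} [MetricSpace X] [MeasurableSpace X] (μ : Measure X)
    (lam : X → ℝ → ℝ) (Clam : ℝ) (hClam : 1 ≤ Clam)
    (hmono : ∀ (x : X) (r s : ℝ), 0 < r → r ≤ s → lam x r ≤ lam x s)
    (hdom : ∀ (x : X) (r : ℝ), 0 < r → μ (ball x r) ≤ ENNReal.ofReal (lam x r))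
    (hdoub : ∀ (x : X) (r : ℝ), 0 < r → lam x r ≤ Clam * lam x (r / 2))
    (β₀ : ℝ≥0∞) (hβ₀ : ENNReal.ofReal Clam ^ Real.logb 2 6 < β₀) :
    ∀ (x : X) (r : ℝ), 0 < r → (∀ ρ : ℝ, 0 < ρ → 0 < lam x ρ) →
      0 < μ (ball x r) →
      ∀ n : ℕ, ∃ k : ℕ, n ≤ k ∧
        μ (ball x ((6 : ℝ) ^ (k + 1) * r)) ≤ β₀ * μ (ball x ((6 : ℝ) ^ k * r)) := by
  intro x r hr hlam hμ n
  by_contra! hgrowth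
  set s := (6 : ℝ) ^ n * r
  have hs : 0 < s := by positivity
  let u : ℕ → ℝ≥0∞ := fun m ↦ μ (ball x ((6 : ℝ) ^ m * s))
  have hscale : ∀ k, (6 : ℝ) ^ k * s = 6 ^ (n + k) * r := fun k ↦ by ring
  have hu₀ : u 0 ≠ 0 := by
    refine (hμ.trans_le (measure_mono (ball_subset_ball ?_))).ne'
    simpa only [hscale, add_zero] using le_mul_of_one_le_left hr.le (one_le_pow₀ (by norm_num))
  have hlower : ∀ m, u 0 * β₀ ^ m ≤ u m := mul_pow_le_of_mul_le_succ fun k ↦ by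
    simpa only [u, hscale, ← add_assoc] using (hgrowth (n + k) le_self_add).le
  have hupper := measure_ball_pow_mul_le_of_le_mul_half hClam (hmono x) (hdom x) (hdoub x) hs
    (hlam s hs).le (by norm_num : (1 : ℝ) ≤ 6)
  obtain ⟨m, hm⟩ := ENNReal.exists_mul_pow_lt_mul_pow hu₀ ENNReal.ofReal_ne_top hβ₀
  exact (hm.trans_le (hlower m)).not_ge (hupper m)
end

section
/- Let (X,d,μ) be a geometrically doubling metric measure space and ρ ≥ 5. Define M_{(ρ)} f(x) = sup_{B ∋ x} μ(ρB)^{-1} ∫_B |f| dμ (supremum over all balls containing x). Then M_{(ρ)} is bounded on L^p(μ) for every p ∈ (1,∞], and is of weak type (1,1). -/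
/-!
The weak type `(1,1)` bound is the Vitali covering argument: the balls `B` with large averages
have a disjoint subfamily whose `((3 + ρ)/2)`-enlargements, hence whose `ρ`-dilates, cover the
level set; dividing by `μ(ρB)` instead of `μ(B)` is what removes the need for a doubling measure.
The disjoint subfamily is countable because geometric doubling makes every ball totally bounded,
hence `X` separable.

The `L^p` bounds follow by a dyadic Marcinkiewicz argument that uses only the weak type bound and
`M h ≤ M (h · 1_{h > t}) + t`: the set `{M h ≥ 2t}` has measure at most `(2/t) ∫_{h > t} h`, and
summing over `t = 2ⁿ` gives a geometric series. The `L^∞` bound holds since `μ(B) ≤ μ(ρB)`.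
-/

open MeasureTheory Metric Set
open scoped ENNReal

/-- The non-centered maximal operator `M_{(ρ)} f(x) = sup_{B ∋ x} μ(ρB)⁻¹ ∫_B |f| dμ`. -/
noncomputable def Mrho {X : Type*} [MetricSpace X] [MeasurableSpace X]
    (μ : Measure X) (ρ : ℝ) (f : X → ℝ) (x : X) : ℝ≥0∞ :=
  ⨆ (c : X) (r : ℝ) (_ : 0 < r) (_ : x ∈ ball c r),
    (μ (ball c (ρ * r)))⁻¹ * ∫⁻ y in ball c r, ENNReal.ofReal |f y| ∂μ

section GeometricDoubling

variable {X : Type*} [PseudoMetricSpace X]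

lemma exists_finset_ball_subset_iUnion_ball_div_two_pow
    (hcov : ∀ (x : X) (r : ℝ), ∃ s : Finset X, ball x r ⊆ ⋃ y ∈ s, ball y (r / 2))
    (x : X) (r : ℝ) (k : ℕ) : ∃ s : Finset X, ball x r ⊆ ⋃ y ∈ s, ball y (r / 2 ^ k) := by
  induction k with
  | zero => exact ⟨{x}, by simp⟩
  | succ k ih =>
    classical
    obtain ⟨s, hs⟩ := ih
    choose t ht using fun y : X => hcov y (r / 2 ^ k)
    refine ⟨s.biUnion t, fun z hz => ?_⟩
    obtain ⟨y, hy, hzy⟩ := mem_iUnion₂.1 (hs hz)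
    obtain ⟨w, hw, hzw⟩ := mem_iUnion₂.1 (ht y hzy)
    rw [div_div, ← pow_succ] at hzw
    exact mem_iUnion₂.2 ⟨w, Finset.mem_biUnion.2 ⟨y, hy, hw⟩, hzw⟩

lemma totallyBounded_ball_of_forall_ball_subset_iUnion_ball_half
    (hcov : ∀ (x : X) (r : ℝ), ∃ s : Finset X, ball x r ⊆ ⋃ y ∈ s, ball y (r / 2))
    (x : X) (r : ℝ) : TotallyBounded (ball x r) := by
  refine Metric.totallyBounded_iff.2 fun ε hε => ?_
  obtain ⟨k, hk⟩ := pow_unbounded_of_one_lt (r / ε) one_lt_two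
  have hrk : r / 2 ^ k < ε := by
    rw [div_lt_iff₀ (by positivity)]
    rwa [div_lt_iff₀ hε, mul_comm] at hk
  obtain ⟨s, hs⟩ := exists_finset_ball_subset_iUnion_ball_div_two_pow hcov x r k
  exact ⟨s, s.finite_toSet, hs.trans (iUnion₂_mono fun y _ => ball_subset_ball hrk.le)⟩

lemma separableSpace_of_forall_ball_subset_iUnion_ball_half
    (hcov : ∀ (x : X) (r : ℝ), ∃ s : Finset X, ball x r ⊆ ⋃ y ∈ s, ball y (r / 2)) :
    TopologicalSpace.SeparableSpace X := by
  rcases isEmpty_or_nonempty X with hX | ⟨⟨x⟩⟩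
  · infer_instance
  rw [← TopologicalSpace.isSeparable_univ_iff, ← iUnion_ball_nat x]
  exact .iUnion fun n =>
    (totallyBounded_ball_of_forall_ball_subset_iUnion_ball_half hcov x n).isSeparable

end GeometricDoubling

section DyadicInterpolation

lemma tsum_lintegral_le_lintegral_tsum {α ι : Type*} [MeasurableSpace α] (μ : Measure α)
    (F : ι → α → ℝ≥0∞) : ∑' i, ∫⁻ y, F i y ∂μ ≤ ∫⁻ y, ∑' i, F i y ∂μ := by
  rw [ENNReal.tsum_eq_iSup_sum]
  refine iSup_le fun s => ?_
  classical
  calc ∑ i ∈ s, ∫⁻ y, F i y ∂μ ≤ ∫⁻ y, ∑ i ∈ s, F i y ∂μ := by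
        induction s using Finset.induction with
        | empty => simp
        | insert a s has ih =>
          simp only [Finset.sum_insert has]
          exact (add_le_add le_rfl ih).trans (le_lintegral_add _ _)
    _ ≤ ∫⁻ y, ∑' i, F i y ∂μ := lintegral_mono fun y => ENNReal.sum_le_tsum s

lemma rpow_le_tsum_ite_two_mul_zpow_le {p : ℝ} (hp : 0 < p) (a : ℝ≥0∞) :
    a ^ p ≤ ∑' n : ℤ, if 2 * 2 ^ n ≤ a then (4 * 2 ^ n : ℝ≥0∞) ^ p else 0 := by
  rcases eq_or_ne a 0 with rfl | ha0
  · simp [ENNReal.zero_rpow_of_pos hp]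
  rcases eq_or_ne a ⊤ with rfl | hatop
  · calc ⊤ ^ p = ∑' _ : ℕ, (1 : ℝ≥0∞) := by
          rw [ENNReal.top_rpow_of_pos hp, ENNReal.tsum_const_eq_top_of_ne_zero one_ne_zero]
      _ ≤ ∑' n : ℕ, if (2 : ℝ≥0∞) * 2 ^ (n : ℤ) ≤ ⊤ then (4 * 2 ^ (n : ℤ) : ℝ≥0∞) ^ p else 0 := by
          refine ENNReal.tsum_le_tsum fun n => ?_
          rw [if_pos le_top, zpow_natCast]
          exact ENNReal.one_le_rpow (one_le_mul_of_one_le_of_one_le (by norm_num)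
            (one_le_pow₀ one_le_two)) hp
      _ ≤ _ := ENNReal.tsum_comp_le_tsum_of_injective Nat.cast_injective _
  obtain ⟨m, hm, hm'⟩ :=
    ENNReal.exists_mem_Ico_zpow ha0 hatop ENNReal.one_lt_two ENNReal.ofNat_ne_top
  have hzpow (k : ℤ) : (2 : ℝ≥0∞) ^ k * 2 ^ (m - 1) = 2 ^ (k + (m - 1)) :=
    (ENNReal.zpow_add two_ne_zero ENNReal.ofNat_ne_top _ _).symm
  have h2 : (2 : ℝ≥0∞) * 2 ^ (m - 1) = 2 ^ m := by
    simpa using hzpow 1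
  have h4 : (4 : ℝ≥0∞) * 2 ^ (m - 1) = 2 ^ (m + 1) := by
    rw [show (4 : ℝ≥0∞) = 2 ^ (2 : ℤ) by norm_num, hzpow]
    ring_nf
  calc a ^ p ≤ ((2 : ℝ≥0∞) ^ (m + 1)) ^ p := ENNReal.rpow_le_rpow hm'.le hp.le
    _ = if 2 * 2 ^ (m - 1) ≤ a then (4 * 2 ^ (m - 1) : ℝ≥0∞) ^ p else 0 := by
        rw [h2, h4, if_pos hm]
    _ ≤ _ := ENNReal.le_tsum (m - 1)

lemma two_zpow_rpow (n : ℤ) (q : ℝ) : ((2 : ℝ≥0∞) ^ n) ^ q = 2 ^ ((n : ℝ) * q) := by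
  rw [← ENNReal.rpow_intCast, ← ENNReal.rpow_mul]

lemma tsum_ite_two_zpow_lt_rpow_le {q : ℝ} (hq : 0 < q) (a : ℝ≥0∞) :
    ∑' n : ℤ, (if (2 : ℝ≥0∞) ^ n < a then ((2 : ℝ≥0∞) ^ n) ^ q else 0) ≤
      (1 - 2 ^ (-q))⁻¹ * a ^ q := by
  rcases eq_or_ne a 0 with rfl | ha0
  · simp
  rcases eq_or_ne a ⊤ with rfl | hatop
  · rw [ENNReal.top_rpow_of_pos hq, ENNReal.mul_top
      (ENNReal.inv_ne_zero.2 (ENNReal.sub_ne_top ENNReal.one_ne_top))]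
    exact le_top
  obtain ⟨m, hm, hm'⟩ :=
    ENNReal.exists_mem_Ico_zpow ha0 hatop ENNReal.one_lt_two ENNReal.ofNat_ne_top
  set F : ℤ → ℝ≥0∞ := fun n => if n ≤ m then ((2 : ℝ≥0∞) ^ n) ^ q else 0
  have hle : ∀ n : ℤ, (if (2 : ℝ≥0∞) ^ n < a then ((2 : ℝ≥0∞) ^ n) ^ q else 0) ≤ F n := by
    intro n
    by_cases hn : n ≤ m
    · simp only [F, if_pos hn]
      split_ifs <;> simp
    · have : ¬ (2 : ℝ≥0∞) ^ n < a := fun h =>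
        (hm'.trans_le (ENNReal.zpow_le_of_le one_le_two (by omega))).not_gt h
      simp [F, if_neg this]
  have hreindex : ∑' j : ℕ, F (m - j) = ∑' n : ℤ, F n := by
    refine Function.Injective.tsum_eq (fun i j hij => by simpa using hij) fun n hn => ?_
    have : n ≤ m := by
      by_contra h
      exact hn (if_neg h)
    exact ⟨(m - n).toNat, show m - ((m - n).toNat : ℤ) = n by omega⟩
  have hgeom : ∀ j : ℕ, F (m - j) = ((2 : ℝ≥0∞) ^ m) ^ q * (2 ^ (-q)) ^ j := by
    intro j
    simp only [F, if_pos (by omega : m - (j : ℤ) ≤ m), two_zpow_rpow, ← ENNReal.rpow_natCast,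
      ← ENNReal.rpow_mul, ← ENNReal.rpow_add _ _ two_ne_zero ENNReal.ofNat_ne_top]
    congr 1
    push_cast
    ring
  calc _ ≤ ∑' n : ℤ, F n := ENNReal.tsum_le_tsum hle
    _ = ((2 : ℝ≥0∞) ^ m) ^ q * (1 - 2 ^ (-q))⁻¹ := by
        rw [← hreindex, tsum_congr hgeom, ENNReal.tsum_mul_left, ENNReal.tsum_geometric]
    _ ≤ (1 - 2 ^ (-q))⁻¹ * a ^ q := by
        rw [mul_comm]
        gcongr

noncomputable def weakTypeLpConst (p : ℝ) : ℝ≥0∞ := 2 * 4 ^ p * (1 - 2 ^ (1 - p))⁻¹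

lemma weakTypeLpConst_ne_top {p : ℝ} (hp : 1 < p) : weakTypeLpConst p ≠ ⊤ := by
  have hlt : (2 : ℝ≥0∞) ^ (1 - p) < 1 :=
    ENNReal.rpow_lt_one_of_one_lt_of_neg ENNReal.one_lt_two (by linarith)
  refine ENNReal.mul_ne_top (ENNReal.mul_ne_top ENNReal.ofNat_ne_top
    (ENNReal.rpow_ne_top_of_nonneg (by linarith) ENNReal.ofNat_ne_top)) ?_
  exact ENNReal.inv_ne_top.2 (tsub_pos_of_lt hlt).ne'

lemma tsum_dyadic_truncation_le {p : ℝ} (hp : 1 < p) (a : ℝ≥0∞) :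
    ∑' n : ℤ, (4 * 2 ^ n : ℝ≥0∞) ^ p * (2 ^ n / 2)⁻¹ * (if 2 ^ n < a then a else 0) ≤
      weakTypeLpConst p * a ^ p := by
  have hterm : ∀ n : ℤ,
      (4 * 2 ^ n : ℝ≥0∞) ^ p * (2 ^ n / 2)⁻¹ * (if 2 ^ n < a then a else 0) =
        2 * 4 ^ p * a * (if (2 : ℝ≥0∞) ^ n < a then ((2 : ℝ≥0∞) ^ n) ^ (p - 1) else 0) := by
    intro n
    split_ifs
    · have h0 : (2 : ℝ≥0∞) ^ n ≠ 0 := (ENNReal.zpow_pos two_ne_zero ENNReal.ofNat_ne_top n).ne'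
      have htop : (2 : ℝ≥0∞) ^ n ≠ ⊤ := ENNReal.zpow_ne_top two_ne_zero ENNReal.ofNat_ne_top n
      rw [ENNReal.mul_rpow_of_nonneg _ _ (by linarith), ENNReal.inv_div (.inl ENNReal.ofNat_ne_top)
        (.inl two_ne_zero), ENNReal.rpow_sub _ _ h0 htop, ENNReal.rpow_one, div_eq_mul_inv,
        div_eq_mul_inv]
      ring
    · simp
  have hpow : a * a ^ (p - 1) = a ^ p := by
    have := ENNReal.rpow_add_of_nonneg (x := a) 1 (p - 1) zero_le_one (by linarith)
    rwa [add_sub_cancel, ENNReal.rpow_one, eq_comm] at this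
  calc _ = 2 * 4 ^ p * a *
        ∑' n : ℤ, (if (2 : ℝ≥0∞) ^ n < a then ((2 : ℝ≥0∞) ^ n) ^ (p - 1) else 0) := by
        rw [tsum_congr hterm, ENNReal.tsum_mul_left]
    _ ≤ 2 * 4 ^ p * a * ((1 - 2 ^ (-(p - 1)))⁻¹ * a ^ (p - 1)) := by
        gcongr
        exact tsum_ite_two_zpow_lt_rpow_le (by linarith) a
    _ = weakTypeLpConst p * a ^ p := by
        rw [weakTypeLpConst, neg_sub, ← hpow]
        ring

lemma le_indicator_lt_add {α : Type*} (h : α → ℝ≥0∞) (t : ℝ≥0∞) (y : α) :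
    h y ≤ {y | t < h y}.indicator h y + t := by
  by_cases hy : t < h y
  · simp [hy]
  · simpa [hy] using not_lt.1 hy

variable {α : Type*} [MeasurableSpace α] {μ : Measure α}

lemma measure_le_lintegral_indicator_of_weakType {T : (α → ℝ≥0∞) → α → ℝ≥0∞}
    (hweak : ∀ h t, t * μ {x | t < T h x} ≤ ∫⁻ y, h y ∂μ)
    (hsub : ∀ h h₁ s, (∀ y, h y ≤ h₁ y + s) → ∀ x, T h x ≤ T h₁ x + s)
    (h : α → ℝ≥0∞) {t : ℝ≥0∞} (ht0 : t ≠ 0) (htop : t ≠ ⊤) :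
    μ {x | 2 * t ≤ T h x} ≤ (t / 2)⁻¹ * ∫⁻ y, {y | t < h y}.indicator h y ∂μ := by
  set k := {y | t < h y}.indicator h
  have hlevel : {x | 2 * t ≤ T h x} ⊆ {x | t / 2 < T k x} := by
    intro x hx
    have : t + t ≤ T k x + t := (two_mul t ▸ hx).trans (hsub h k t (le_indicator_lt_add h t) x)
    exact (ENNReal.half_lt_self ht0 htop).trans_le ((ENNReal.add_le_add_iff_right htop).1 this)
  refine (measure_mono hlevel).trans ((ENNReal.mul_le_iff_le_inv ?_ ?_).1 (hweak k (t / 2)))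
  · exact ENNReal.div_ne_zero.2 ⟨ht0, ENNReal.ofNat_ne_top⟩
  · exact ENNReal.div_ne_top htop two_ne_zero

theorem lintegral_rpow_le_of_weakType {T : (α → ℝ≥0∞) → α → ℝ≥0∞}
    (hmeas : ∀ h, Measurable (T h))
    (hweak : ∀ h t, t * μ {x | t < T h x} ≤ ∫⁻ y, h y ∂μ)
    (hsub : ∀ h h₁ s, (∀ y, h y ≤ h₁ y + s) → ∀ x, T h x ≤ T h₁ x + s)
    {p : ℝ} (hp : 1 < p) (h : α → ℝ≥0∞) :
    ∫⁻ x, T h x ^ p ∂μ ≤ weakTypeLpConst p * ∫⁻ y, h y ^ p ∂μ := by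
  set w : ℤ → ℝ≥0∞ := fun n => (4 * 2 ^ n) ^ p
  set L : ℤ → Set α := fun n => {x | 2 * 2 ^ n ≤ T h x}
  have hL (n : ℤ) : MeasurableSet (L n) := measurableSet_le measurable_const (hmeas h)
  calc ∫⁻ x, T h x ^ p ∂μ ≤ ∫⁻ x, ∑' n, (L n).indicator (fun _ => w n) x ∂μ :=
        lintegral_mono fun x => by
          simpa only [indicator_apply, L, w, mem_ofPred_eq] using
            rpow_le_tsum_ite_two_mul_zpow_le (by linarith) (T h x)
    _ = ∑' n, w n * μ (L n) := by
        rw [lintegral_tsum fun n => (measurable_const.indicator (hL n)).aemeasurable]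
        exact tsum_congr fun n => lintegral_indicator_const (hL n) _
    _ ≤ ∑' n : ℤ, ∫⁻ y, w n * (2 ^ n / 2)⁻¹ * {y | 2 ^ n < h y}.indicator h y ∂μ := by
        refine ENNReal.tsum_le_tsum fun n => ?_
        grw [measure_le_lintegral_indicator_of_weakType hweak hsub h
          (ENNReal.zpow_pos two_ne_zero ENNReal.ofNat_ne_top n).ne'
          (ENNReal.zpow_ne_top two_ne_zero ENNReal.ofNat_ne_top n), ← mul_assoc]
        exact lintegral_const_mul_le _ _
    _ ≤ ∫⁻ y, ∑' n : ℤ, w n * (2 ^ n / 2)⁻¹ * {y | 2 ^ n < h y}.indicator h y ∂μ :=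
        tsum_lintegral_le_lintegral_tsum μ _
    _ ≤ ∫⁻ y, weakTypeLpConst p * h y ^ p ∂μ :=
        lintegral_mono fun y => by
          simpa only [indicator_apply, mem_ofPred_eq] using tsum_dyadic_truncation_le hp (h y)
    _ = weakTypeLpConst p * ∫⁻ y, h y ^ p ∂μ :=
        lintegral_const_mul' _ _ (weakTypeLpConst_ne_top hp)

end DyadicInterpolation

section DilatedMaximal

variable {X : Type*} [PseudoMetricSpace X] [MeasurableSpace X]

noncomputable def dilatedMaximal (μ : Measure X) (ρ : ℝ) (h : X → ℝ≥0∞) (x : X) : ℝ≥0∞ :=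
  ⨆ (c : X) (r : ℝ) (_ : 0 < r) (_ : x ∈ ball c r),
    (μ (ball c (ρ * r)))⁻¹ * ∫⁻ y in ball c r, h y ∂μ

variable {μ : Measure X} {ρ : ℝ}

lemma lt_dilatedMaximal_iff {h : X → ℝ≥0∞} {x : X} {a : ℝ≥0∞} :
    a < dilatedMaximal μ ρ h x ↔ ∃ c r, 0 < r ∧ x ∈ ball c r ∧
      a < (μ (ball c (ρ * r)))⁻¹ * ∫⁻ y in ball c r, h y ∂μ := by
  simp only [dilatedMaximal, lt_iSup_iff, exists_prop]

lemma le_dilatedMaximal (h : X → ℝ≥0∞) {x c : X} {r : ℝ} (hr : 0 < r) (hx : x ∈ ball c r) :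
    (μ (ball c (ρ * r)))⁻¹ * ∫⁻ y in ball c r, h y ∂μ ≤ dilatedMaximal μ ρ h x :=
  le_iSup₂_of_le c r (le_iSup₂_of_le (f := fun _ _ => _) hr hx le_rfl)

lemma isOpen_lt_dilatedMaximal (h : X → ℝ≥0∞) (a : ℝ≥0∞) :
    IsOpen {x | a < dilatedMaximal μ ρ h x} := by
  refine isOpen_iff_forall_mem_open.2 fun x hx => ?_
  obtain ⟨c, r, hr, hx, hlt⟩ := lt_dilatedMaximal_iff.1 hx
  exact ⟨ball c r, fun z hz => lt_dilatedMaximal_iff.2 ⟨c, r, hr, hz, hlt⟩, isOpen_ball, hx⟩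

lemma measurable_dilatedMaximal [OpensMeasurableSpace X] (h : X → ℝ≥0∞) :
    Measurable (dilatedMaximal μ ρ h) :=
  measurable_of_Ioi fun a => (isOpen_lt_dilatedMaximal h a).measurableSet

lemma dilatedMaximal_le_add (hρ : 1 ≤ ρ) {h h₁ : X → ℝ≥0∞} {s : ℝ≥0∞}
    (hle : ∀ᵐ y ∂μ, h y ≤ h₁ y + s) (x : X) :
    dilatedMaximal μ ρ h x ≤ dilatedMaximal μ ρ h₁ x + s := by
  refine iSup₂_le fun c r => iSup₂_le fun hr hx => ?_
  set a := (μ (ball c (ρ * r)))⁻¹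
  have hball : a * μ (ball c r) ≤ 1 :=
    (mul_le_mul_right (measure_mono (ball_subset_ball (by nlinarith))) a).trans
      (ENNReal.inv_mul_le_one _)
  calc a * ∫⁻ y in ball c r, h y ∂μ ≤ a * ∫⁻ y in ball c r, (h₁ y + s) ∂μ := by
        grw [lintegral_mono_ae (ae_restrict_of_ae hle)]
    _ = a * ∫⁻ y in ball c r, h₁ y ∂μ + s * (a * μ (ball c r)) := by
        rw [lintegral_add_right _ measurable_const, setLIntegral_const]
        ring
    _ ≤ dilatedMaximal μ ρ h₁ x + s * 1 := by
        gcongr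
        exact le_dilatedMaximal h₁ hr hx
    _ = dilatedMaximal μ ρ h₁ x + s := by rw [mul_one]

lemma dilatedMaximal_le_essSup (hρ : 1 ≤ ρ) (h : X → ℝ≥0∞) (x : X) :
    dilatedMaximal μ ρ h x ≤ essSup h μ := by
  simpa [dilatedMaximal] using
    dilatedMaximal_le_add hρ (h₁ := 0) (by simpa using ae_le_essSup (f := h)) x


lemma mul_measure_le_lintegral_of_forall_mem_ball [OpensMeasurableSpace X]
    [TopologicalSpace.SeparableSpace X] (hρ : 3 < ρ) (h : X → ℝ≥0∞) {E : Set X} (c : X → X)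
    (r : X → ℝ) (R : ℝ) (t : ℝ≥0∞)
    (hE : ∀ x ∈ E, 0 < r x ∧ r x ≤ R ∧ x ∈ ball (c x) (r x) ∧
      t * μ (ball (c x) (ρ * r x)) ≤ ∫⁻ y in ball (c x) (r x), h y ∂μ) :
    t * μ E ≤ ∫⁻ y, h y ∂μ := by
  obtain ⟨u, huE, hdisj, hcov⟩ := Vitali.exists_disjoint_subfamily_covering_enlargement_closedBall
    E c r R (fun x hx => (hE x hx).2.1) ((3 + ρ) / 2) (by linarith)
  have hdisj' : u.PairwiseDisjoint fun x => ball (c x) (r x) :=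
    hdisj.mono fun _ => ball_subset_closedBall
  have hu : u.Countable := hdisj'.countable_of_isOpen (fun _ _ => isOpen_ball)
    fun x hx => ⟨c x, mem_ball_self (hE x (huE hx)).1⟩
  have hEu : E ⊆ ⋃ x ∈ u, ball (c x) (ρ * r x) := by
    intro x hx
    obtain ⟨b, hb, hxb⟩ := hcov x hx
    have hdil : closedBall (c b) ((3 + ρ) / 2 * r b) ⊆ ball (c b) (ρ * r b) :=
      closedBall_subset_ball (by nlinarith [(hE b (huE hb)).1])
    exact mem_biUnion hb (hdil (hxb (ball_subset_closedBall (hE x hx).2.2.1)))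
  have := hu.to_subtype
  calc t * μ E ≤ t * ∑' x : u, μ (ball (c x) (ρ * r x)) := by
        gcongr
        exact (measure_mono hEu).trans (measure_biUnion_le μ hu _)
    _ = ∑' x : u, t * μ (ball (c x) (ρ * r x)) := ENNReal.tsum_mul_left.symm
    _ ≤ ∑' x : u, ∫⁻ y in ball (c x) (r x), h y ∂μ :=
        ENNReal.tsum_le_tsum fun x => (hE x (huE x.2)).2.2.2
    _ = ∫⁻ y in ⋃ x : u, ball (c x) (r x), h y ∂μ :=
        (lintegral_iUnion (s := fun x : u => ball (c x) (r x)) (fun _ => measurableSet_ball)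
          (fun x y hxy => hdisj' x.2 y.2 (Subtype.coe_injective.ne hxy)) h).symm
    _ ≤ ∫⁻ y, h y ∂μ := setLIntegral_le_lintegral _ _

lemma mul_measure_lt_dilatedMaximal_le [OpensMeasurableSpace X]
    [TopologicalSpace.SeparableSpace X] (hρ : 3 < ρ) (h : X → ℝ≥0∞) (t : ℝ≥0∞) :
    t * μ {x | t < dilatedMaximal μ ρ h x} ≤ ∫⁻ y, h y ∂μ := by
  -- Vitali's lemma needs bounded radii, so the level set is exhausted by radii `≤ n`.
  set E : ℕ → Set X := fun n => {x | ∃ c, ∃ r : ℝ, 0 < r ∧ r ≤ n ∧ x ∈ ball c r ∧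
    t * μ (ball c (ρ * r)) ≤ ∫⁻ y in ball c r, h y ∂μ}
  have hcover : {x | t < dilatedMaximal μ ρ h x} ⊆ ⋃ n, E n := by
    intro x hx
    obtain ⟨c, r, hr, hxr, hlt⟩ := lt_dilatedMaximal_iff.1 hx
    refine mem_iUnion.2 ⟨⌈r⌉₊, c, r, hr, Nat.le_ceil r, hxr, ENNReal.mul_le_of_le_div ?_⟩
    rw [ENNReal.div_eq_inv_mul]
    exact hlt.le
  have hmono : Monotone E := fun m n hmn x ⟨c, r, hr, hrm, hrest⟩ =>
    ⟨c, r, hr, hrm.trans (Nat.cast_le.2 hmn), hrest⟩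
  calc t * μ {x | t < dilatedMaximal μ ρ h x} ≤ t * ⨆ n, μ (E n) := by
        rw [← hmono.measure_iUnion]
        exact mul_le_mul_right (measure_mono hcover) t
    _ = ⨆ n, t * μ (E n) := ENNReal.mul_iSup _ _
    _ ≤ ∫⁻ y, h y ∂μ := iSup_le fun n => by
        choose! c r hE using fun x (hx : x ∈ E n) => hx
        exact mul_measure_le_lintegral_of_forall_mem_ball hρ h c r n t hE

end DilatedMaximal

lemma Mrho_eq_dilatedMaximal {X : Type*} [MetricSpace X] [MeasurableSpace X] (μ : Measure X)
    (ρ : ℝ) (f : X → ℝ) : Mrho μ ρ f = dilatedMaximal μ ρ fun y => ENNReal.ofReal |f y| :=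
  rfl

/-- On a geometrically doubling metric measure space, for `ρ ≥ 5`, the maximal operator
`M_{(ρ)}` is bounded on `L^p(μ)` for `1 < p ≤ ∞` and is of weak type `(1,1)`. -/
theorem Mrho_bounded
    {X : Type*} [MetricSpace X] [MeasurableSpace X] [BorelSpace X] (μ : Measure X)
    (N₀ : ℕ) (hgeom : ∀ (x : X) (r : ℝ), ∃ s : Finset X,
      s.card ≤ N₀ ∧ ball x r ⊆ ⋃ y ∈ s, ball y (r / 2))
    (ρ : ℝ) (hρ : 5 ≤ ρ) :
    (∀ p : ℝ, 1 < p → ∃ C : ℝ≥0∞, C < ⊤ ∧ ∀ f : X → ℝ,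
        (∫⁻ x, Mrho μ ρ f x ^ p ∂μ) ^ (1 / p) ≤
          C * (∫⁻ x, ENNReal.ofReal |f x| ^ p ∂μ) ^ (1 / p)) ∧
    (∃ C : ℝ≥0∞, C < ⊤ ∧ ∀ f : X → ℝ, ∀ᵐ x ∂μ,
        Mrho μ ρ f x ≤ C * essSup (fun y => ENNReal.ofReal |f y|) μ) ∧
    (∃ C : ℝ≥0∞, C < ⊤ ∧ ∀ f : X → ℝ, ∀ t : ℝ, 0 < t →
        ENNReal.ofReal t * μ {x | ENNReal.ofReal t < Mrho μ ρ f x} ≤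
          C * ∫⁻ x, ENNReal.ofReal |f x| ∂μ) := by
  have := separableSpace_of_forall_ball_subset_iUnion_ball_half fun x r =>
    (hgeom x r).imp fun _ => And.right
  have hweak (h : X → ℝ≥0∞) (t : ℝ≥0∞) :=
    mul_measure_lt_dilatedMaximal_le (μ := μ) (by linarith) h t
  refine ⟨fun p hp => ⟨weakTypeLpConst p ^ (1 / p), ?_, fun f => ?_⟩,
    ⟨1, ENNReal.one_lt_top, fun f => ae_of_all μ fun x => ?_⟩,
    ⟨1, ENNReal.one_lt_top, fun f t _ => ?_⟩⟩
  · exact ENNReal.rpow_lt_top_of_nonneg (by positivity) (weakTypeLpConst_ne_top hp)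
  · have hLp := lintegral_rpow_le_of_weakType measurable_dilatedMaximal hweak
      (fun _ _ _ hle => dilatedMaximal_le_add (by linarith) (ae_of_all μ hle)) hp
      fun y => ENNReal.ofReal |f y|
    rw [Mrho_eq_dilatedMaximal, ← ENNReal.mul_rpow_of_nonneg _ _ (by positivity)]
    exact ENNReal.rpow_le_rpow hLp (by positivity)
  · rw [one_mul]
    exact dilatedMaximal_le_essSup (by linarith) _ x
  · rw [one_mul]
    exact hweak _ (ENNReal.ofReal t)
end
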